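/- arXiv:math/0410096 — 3 statements merged into one kernel-verified Lean document; each statement's English description precedes it below -/
import Mathlib

section
/- Let X be a real Banach space and ε > 0. A set {x_1, …, x_n} ⊆ B_X is ε-shattered by B_{X*} if and only if x_1, …, x_n are linearly independent and ε-dominate the ℓ_1^n unit-vector basis, i.e., for all reals a_1, …, a_n, ε·Σ_{i=1}^n |a_i| ≤ ‖Σ_{i=1}^n a_i x_i‖. -/
open scoped BigOperators

/-- A finite family of points, viewed as the set of its values, is `ε`-shattered by a class `F`
of real-valued functions. -/
def EpsShattered {Ω : Type*} (F : Set (Ω → ℝ)) (ε : ℝ) {n : ℕ} (x : Fin n → Ω) : Prop :=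
  ∃ s : Ω → ℝ, ∀ I : Finset (Fin n), ∃ f ∈ F,
    (∀ i, i ∈ I → s (x i) + ε ≤ f (x i)) ∧ (∀ i, i ∉ I → f (x i) ≤ s (x i) - ε)

/-- The closed unit ball of the dual of `X`, viewed as a class of real-valued functions on `X`. -/
def DualBallFuns (X : Type*) [NormedAddCommGroup X] [NormedSpace ℝ X] : Set (X → ℝ) :=
  {g : X → ℝ | ∃ f : X →L[ℝ] ℝ, ‖f‖ ≤ 1 ∧ g = ⇑f}

/-!
Shattering `I` and its complement with `f_I, f_Iᶜ ∈ B_{X*}`, where `I = {i | 0 ≤ a i}`, gives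
`2 ε ∑ |a i| ≤ (f_I - f_Iᶜ) (∑ a i • x i) ≤ 2 ‖∑ a i • x i‖`; domination with `ε > 0` forces
linear independence. Conversely, domination says exactly that the functional `x i ↦ ± ε` on the
span of the `x i` has norm at most `1`, and Hahn–Banach extends it to `X` without increasing the
norm, so `s = 0` witnesses the shattering.
-/

section Domination

variable {ι X : Type*} [Fintype ι] [NormedAddCommGroup X] [NormedSpace ℝ X]

theorem LinearIndependent.of_mul_sum_abs_le_norm {ε : ℝ} (hε : 0 < ε) {x : ι → X}
    (hdom : ∀ a : ι → ℝ, ε * ∑ i, |a i| ≤ ‖∑ i, a i • x i‖) : LinearIndependent ℝ x := by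
  rw [Fintype.linearIndependent_iff]
  intro a ha i
  have hsum : ∑ j, |a j| = 0 := by
    have := hdom a
    rw [ha, norm_zero] at this
    exact le_antisymm (nonpos_of_mul_nonpos_right this hε) (by positivity)
  exact abs_eq_zero.mp <|
    (Finset.sum_eq_zero_iff_of_nonneg fun j _ => abs_nonneg (a j)).mp hsum i (Finset.mem_univ i)

theorem ContinuousLinearMap.sum_mul_apply_le (g : X →L[ℝ] ℝ) (a : ι → ℝ) (x : ι → X) :
    ∑ i, a i * g (x i) ≤ ‖g‖ * ‖∑ i, a i • x i‖ := by
  have hsum : ∑ i, a i * g (x i) = g (∑ i, a i • x i) := by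
    simp only [map_sum, map_smul, smul_eq_mul]
  rw [hsum]
  exact (le_abs_self _).trans (g.le_opNorm _)

theorem LinearIndependent.exists_norm_le_one_apply_eq {x : ι → X} (hli : LinearIndependent ℝ x)
    {c : ι → ℝ} (hc : ∀ a : ι → ℝ, |∑ i, a i * c i| ≤ ‖∑ i, a i • x i‖) :
    ∃ g : X →L[ℝ] ℝ, ‖g‖ ≤ 1 ∧ ∀ i, g (x i) = c i := by
  set p := Submodule.span ℝ (Set.range x)
  let b : Module.Basis ι ℝ p := Module.Basis.span hli
  let φ : p →ₗ[ℝ] ℝ := b.constr ℝ c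
  have hb : ∀ i, (b i : X) = x i := fun i => congrArg Subtype.val (Module.Basis.span_apply hli i)
  have hφ : ∀ y : p, ‖φ y‖ ≤ 1 * ‖y‖ := by
    intro y
    have hφy : φ y = ∑ i, b.repr y i * c i := by
      simp only [φ, Module.Basis.constr_apply_fintype, Module.Basis.equivFun_apply, smul_eq_mul]
    have hy : (y : X) = ∑ i, b.repr y i • x i := by
      conv_lhs => rw [← b.sum_repr y]
      simp only [Submodule.coe_sum, Submodule.coe_smul, hb]
    rw [Real.norm_eq_abs, hφy, one_mul, ← Submodule.norm_coe, hy]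
    exact hc _
  obtain ⟨g, hg, hgnorm⟩ := exists_extension_norm_eq p (φ.mkContinuous 1 hφ)
  refine ⟨g, hgnorm ▸ φ.mkContinuous_norm_le zero_le_one hφ, fun i => ?_⟩
  rw [← hb, hg, LinearMap.mkContinuous_apply, Module.Basis.constr_basis]

theorem EpsShattered.mul_sum_abs_le_norm {ε : ℝ} {n : ℕ} {x : Fin n → X}
    (h : EpsShattered (DualBallFuns X) ε x) (a : Fin n → ℝ) :
    ε * ∑ i, |a i| ≤ ‖∑ i, a i • x i‖ := by
  obtain ⟨s, hs⟩ := h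
  set I : Finset (Fin n) := Finset.univ.filter fun i => 0 ≤ a i
  obtain ⟨_, ⟨f, hf, rfl⟩, hfI, hfIc⟩ := hs I
  obtain ⟨_, ⟨g, hg, rfl⟩, hgIc, hgI⟩ := hs Iᶜ
  have hterm : ∀ i, 2 * ε * |a i| ≤ a i * (f - g) (x i) := by
    intro i
    rw [sub_apply]
    by_cases hi : i ∈ I
    · have ha : 0 ≤ a i := (Finset.mem_filter.mp hi).2
      have := hfI i hi
      have := hgI i (Finset.notMem_compl.mpr hi)
      rw [abs_of_nonneg ha]
      nlinarith
    · have ha : a i < 0 := not_le.mp fun ha => hi (Finset.mem_filter.mpr ⟨Finset.mem_univ i, ha⟩)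
      have := hfIc i hi
      have := hgIc i (Finset.mem_compl.mpr hi)
      rw [abs_of_neg ha]
      nlinarith
  have hfg : ‖f - g‖ ≤ 2 := (norm_sub_le f g).trans (by linarith)
  have key : 2 * (ε * ∑ i, |a i|) ≤ 2 * ‖∑ i, a i • x i‖ :=
    calc 2 * (ε * ∑ i, |a i|) = ∑ i, 2 * ε * |a i| := by simp only [Finset.mul_sum, mul_assoc]
      _ ≤ ∑ i, a i * (f - g) (x i) := Finset.sum_le_sum fun i _ => hterm i
      _ ≤ ‖f - g‖ * ‖∑ i, a i • x i‖ := (f - g).sum_mul_apply_le a x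
      _ ≤ 2 * ‖∑ i, a i • x i‖ := by gcongr
  linarith

end Domination

theorem stmt1_general {X : Type*} [NormedAddCommGroup X] [NormedSpace ℝ X]
    (ε : ℝ) (hε : 0 < ε) {n : ℕ} (x : Fin n → X) :
    EpsShattered (DualBallFuns X) ε x ↔
      (LinearIndependent ℝ x ∧ ∀ a : Fin n → ℝ, ε * ∑ i, |a i| ≤ ‖∑ i, a i • x i‖) := by
  refine ⟨fun h => ⟨.of_mul_sum_abs_le_norm hε h.mul_sum_abs_le_norm, h.mul_sum_abs_le_norm⟩, ?_⟩
  rintro ⟨hli, hdom⟩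
  refine ⟨0, fun I => ?_⟩
  let c : Fin n → ℝ := fun i => if i ∈ I then ε else -ε
  have hc : ∀ a : Fin n → ℝ, |∑ i, a i * c i| ≤ ‖∑ i, a i • x i‖ := by
    intro a
    calc |∑ i, a i * c i| ≤ ∑ i, |a i * c i| := Finset.abs_sum_le_sum_abs _ _
      _ = ε * ∑ i, |a i| := by
        rw [Finset.mul_sum]
        refine Finset.sum_congr rfl fun i _ => ?_
        by_cases hi : i ∈ I <;> simp [c, hi, abs_mul, abs_of_pos hε, mul_comm]
      _ ≤ _ := hdom a
  obtain ⟨g, hg, hgx⟩ := hli.exists_norm_le_one_apply_eq hc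
  refine ⟨g, ⟨g, hg, rfl⟩, fun i hi => ?_, fun i hi => ?_⟩ <;> simp [hgx, c, hi]

/-- A set `{x_1, …, x_n} ⊆ B_X` is `ε`-shattered by `B_{X*}` if and only if
`x_1, …, x_n` are linearly independent and `ε`-dominate the `ℓ_1^n` unit-vector basis. -/
theorem stmt1 {X : Type*} [NormedAddCommGroup X] [NormedSpace ℝ X] [CompleteSpace X]
    (ε : ℝ) (hε : 0 < ε) {n : ℕ} (x : Fin n → X) (hx : ∀ i, ‖x i‖ ≤ 1) :
    EpsShattered (DualBallFuns X) ε x ↔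
      (LinearIndependent ℝ x ∧ ∀ a : Fin n → ℝ, ε * ∑ i, |a i| ≤ ‖∑ i, a i • x i‖) :=
  stmt1_general ε hε x
end

section
/- Let X be a real Banach space, let 1 < p ≤ 2, and suppose T ≥ 1 is a constant such that for every n and every x_1, …, x_n ∈ X, 𝔼‖Σ_{i=1}^n ε_i x_i‖ ≤ T·(Σ_{i=1}^n ‖x_i‖^p)^{1/p}, where (ε_i) are independent Rademacher random variables (taking values ±1 with probability 1/2 each). Then for every ε > 0, every subset of B_X that is ε-shattered by B_{X*} has cardinality at most (T/ε)^{p/(p−1)} + 1. -/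
/-!
Shattering forces every signed sum of the points to be long: for a sign pattern `σ`, the
functional `f` realising the subset `{i | σ i}` satisfies `σ i (f (x i) - s (x i)) ≥ ε` for
every `i`, so `‖∑ σ i x i‖ ≥ f (∑ σ i x i) ≥ n ε + ∑ σ i s (x i)`. The last sum averages to zero
over all sign patterns, so the average of `‖∑ σ i x i‖` is at least `n ε`. Type `p` bounds that
average by `T n^{1/p}`, and `n ε ≤ T n^{1/p}` rearranges to `n ≤ (T/ε)^{p/(p-1)}`.
-/

open scoped BigOperators

theorem sum_pi_bool_sign_eq_zero {ι : Type*} [Fintype ι] [DecidableEq ι] (i : ι) :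
    ∑ σ : ι → Bool, (if σ i then (1 : ℝ) else -1) = 0 := by
  refine Finset.sum_involution (fun σ _ => Function.update σ i (!σ i)) ?_ ?_ ?_ ?_
  · intro σ _
    cases σ i <;> simp
  · intro σ _ _ hσ
    simpa using congrFun hσ i
  · intro σ _
    exact Finset.mem_univ _
  · intro σ _
    simp

theorem sum_pi_bool_sum_sign_mul_eq_zero {ι : Type*} [Fintype ι] [DecidableEq ι] (c : ι → ℝ) :
    ∑ σ : ι → Bool, ∑ i, (if σ i then (1 : ℝ) else -1) * c i = 0 := by
  rw [Finset.sum_comm]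
  exact Finset.sum_eq_zero fun i _ => by rw [← Finset.sum_mul, sum_pi_bool_sign_eq_zero, zero_mul]

theorem EpsShattered.exists_forall_sign_sum_ge {Ω : Type*} {F : Set (Ω → ℝ)} {ε : ℝ} {n : ℕ}
    {x : Fin n → Ω} (hx : EpsShattered F ε x) :
    ∃ s : Ω → ℝ, ∀ σ : Fin n → Bool, ∃ f ∈ F,
      n * ε ≤ ∑ i, (if σ i then (1 : ℝ) else -1) * (f (x i) - s (x i)) := by
  obtain ⟨s, hs⟩ := hx
  refine ⟨s, fun σ => ?_⟩
  obtain ⟨f, hf, hfI, hfIc⟩ := hs {i | σ i}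
  refine ⟨f, hf, ?_⟩
  have hterm : ∀ i, ε ≤ (if σ i then (1 : ℝ) else -1) * (f (x i) - s (x i)) := by
    intro i
    by_cases h : σ i
    · have := hfI i (by simp [h])
      simp only [h, if_true]
      linarith
    · have := hfIc i (by simp [h])
      simp only [h, if_false, Bool.false_eq_true]
      linarith
  simpa using Finset.sum_le_sum fun i (_ : i ∈ Finset.univ) => hterm i

theorem ContinuousLinearMap.sum_sign_mul_apply_le_norm {X : Type*} [NormedAddCommGroup X]
    [NormedSpace ℝ X] {f : X →L[ℝ] ℝ} (hf : ‖f‖ ≤ 1) {n : ℕ} (σ : Fin n → Bool) (x : Fin n → X) :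
    ∑ i, (if σ i then (1 : ℝ) else -1) * f (x i) ≤
      ‖∑ i, (if σ i then (1 : ℝ) else -1) • x i‖ := by
  set v := ∑ i, (if σ i then (1 : ℝ) else -1) • x i
  have hfv : ∑ i, (if σ i then (1 : ℝ) else -1) * f (x i) = f v := by
    simp only [v, map_sum, map_smul, smul_eq_mul]
  calc ∑ i, (if σ i then (1 : ℝ) else -1) * f (x i) = f v := hfv
    _ ≤ ‖f v‖ := le_abs_self _
    _ ≤ ‖f‖ * ‖v‖ := f.le_opNorm v
    _ ≤ ‖v‖ := by simpa using mul_le_mul_of_nonneg_right hf (norm_nonneg v)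

theorem EpsShattered.two_pow_mul_le_sum_norm {X : Type*} [NormedAddCommGroup X]
    [NormedSpace ℝ X] {ε : ℝ} {n : ℕ} {x : Fin n → X} (hx : EpsShattered (DualBallFuns X) ε x) :
    2 ^ n * (n * ε) ≤ ∑ σ : Fin n → Bool, ‖∑ i, (if σ i then (1 : ℝ) else -1) • x i‖ := by
  obtain ⟨s, hs⟩ := hx.exists_forall_sign_sum_ge
  have hσ : ∀ σ : Fin n → Bool,
      n * ε + ∑ i, (if σ i then (1 : ℝ) else -1) * s (x i) ≤
        ‖∑ i, (if σ i then (1 : ℝ) else -1) • x i‖ := by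
    intro σ
    obtain ⟨_, ⟨f, hf, rfl⟩, hsum⟩ := hs σ
    have := f.sum_sign_mul_apply_le_norm hf σ x
    simp only [mul_sub, Finset.sum_sub_distrib] at hsum
    linarith
  calc 2 ^ n * (n * ε)
      = ∑ σ : Fin n → Bool, (n * ε + ∑ i, (if σ i then (1 : ℝ) else -1) * s (x i)) := by
        rw [Finset.sum_add_distrib, sum_pi_bool_sum_sign_mul_eq_zero]
        simp
    _ ≤ _ := Finset.sum_le_sum fun σ _ => hσ σ

theorem le_rpow_of_mul_le_mul_rpow_inv {n ε T p : ℝ} (hn : 0 ≤ n) (hε : 0 < ε) (hT : 0 ≤ T)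
    (hp : 1 < p) (h : n * ε ≤ T * n ^ p⁻¹) : n ≤ (T / ε) ^ (p / (p - 1)) := by
  rcases hn.eq_or_lt with rfl | hn
  · exact Real.rpow_nonneg (div_nonneg hT hε.le) _
  have hsplit : n = n ^ (1 - p⁻¹) * n ^ p⁻¹ := by
    rw [← Real.rpow_add hn, sub_add_cancel, Real.rpow_one]
  have hbase : n ^ (1 - p⁻¹) ≤ T / ε := by
    rw [le_div_iff₀ hε]
    refine le_of_mul_le_mul_right ?_ (Real.rpow_pos_of_pos hn p⁻¹)
    calc n ^ (1 - p⁻¹) * ε * n ^ p⁻¹ = n ^ (1 - p⁻¹) * n ^ p⁻¹ * ε := by ring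
      _ = n * ε := by rw [← hsplit]
      _ ≤ T * n ^ p⁻¹ := h
  have hexp : (1 - p⁻¹) * (p / (p - 1)) = 1 := by
    have : p - 1 ≠ 0 := by linarith
    field_simp
  calc n = (n ^ (1 - p⁻¹)) ^ (p / (p - 1)) := by rw [← Real.rpow_mul hn.le, hexp, Real.rpow_one]
    _ ≤ (T / ε) ^ (p / (p - 1)) :=
      Real.rpow_le_rpow (Real.rpow_nonneg hn.le _) hbase (div_nonneg (by linarith) (by linarith))

theorem stmt2_general {X : Type*} [NormedAddCommGroup X] [NormedSpace ℝ X]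
    (p T : ℝ) (hp1 : 1 < p) (hT : 1 ≤ T)
    (htype : ∀ (n : ℕ) (x : Fin n → X),
      (∑ σ : Fin n → Bool, ‖∑ i, (if σ i then (1 : ℝ) else -1) • x i‖) ≤
        2 ^ n * (T * (∑ i, ‖x i‖ ^ p) ^ p⁻¹)) :
    ∀ ε : ℝ, 0 < ε → ∀ (n : ℕ) (x : Fin n → X), Function.Injective x →
      (∀ i, ‖x i‖ ≤ 1) → EpsShattered (DualBallFuns X) ε x →
      (n : ℝ) ≤ (T / ε) ^ (p / (p - 1)) + 1 := by
  intro ε hε n x _ hball hsh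
  have hsum_pow : ∑ i, ‖x i‖ ^ p ≤ n := by
    simpa using Finset.sum_le_sum fun i (_ : i ∈ Finset.univ) =>
      Real.rpow_le_one (norm_nonneg (x i)) (hball i) (by linarith)
  have hnε : (n : ℝ) * ε ≤ T * (n : ℝ) ^ p⁻¹ := by
    have hlower := hsh.two_pow_mul_le_sum_norm.trans (htype n x)
    calc (n : ℝ) * ε ≤ T * (∑ i, ‖x i‖ ^ p) ^ p⁻¹ := le_of_mul_le_mul_left hlower (by positivity)
      _ ≤ T * (n : ℝ) ^ p⁻¹ := by gcongr
  have := le_rpow_of_mul_le_mul_rpow_inv (Nat.cast_nonneg n) hε (by linarith) hp1 hnε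
  linarith

/-- If `X` has Rademacher type `p` (`1 < p ≤ 2`) with constant `T ≥ 1`
(the expectation over signs being written as an average over all `2^n` sign patterns), then
every subset of `B_X` that is `ε`-shattered by `B_{X*}` has cardinality at most
`(T/ε)^{p/(p-1)} + 1`. -/
theorem stmt2 {X : Type*} [NormedAddCommGroup X] [NormedSpace ℝ X] [CompleteSpace X]
    (p T : ℝ) (hp1 : 1 < p) (hp2 : p ≤ 2) (hT : 1 ≤ T)
    (htype : ∀ (n : ℕ) (x : Fin n → X),
      (∑ σ : Fin n → Bool, ‖∑ i, (if σ i then (1 : ℝ) else -1) • x i‖) ≤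
        2 ^ n * (T * (∑ i, ‖x i‖ ^ p) ^ p⁻¹)) :
    ∀ ε : ℝ, 0 < ε → ∀ (n : ℕ) (x : Fin n → X), Function.Injective x →
      (∀ i, ‖x i‖ ≤ 1) → EpsShattered (DualBallFuns X) ε x →
      (n : ℝ) ≤ (T / ε) ^ (p / (p - 1)) + 1 :=
  stmt2_general p T hp1 hT htype
end

section
/- For every 1 ≤ p, q ≤ ∞ there is a constant C_{p,q} such that for every n, Γ_n(B_p^n, B_q^n) ≤ C_{p,q}·n^θ, where θ = 1/2 + 1/p − 1/q if 2 ≤ p, q ≤ ∞; θ = 1 − 1/q if 1 ≤ p ≤ 2; θ = 1 − 1/q if 1 ≤ q ≤ 2 ≤ p ≤ ∞ and p' > q; and θ = 1/p if 1 ≤ q ≤ 2 ≤ p ≤ ∞ and p' ≤ q. Equivalently, there exist x_1, …, x_n ∈ B_p^n with (C_{p,q}^{-1} n^{−θ})·B_q^n ⊆ absconv(x_1, …, x_n). -/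
open scoped BigOperators ENNReal Pointwise

/-- The unit ball of `ℓ_p^n` (`1 ≤ p ≤ ∞`), as a subset of `ℝ^n`. -/
noncomputable def pball (p : ℝ≥0∞) (n : ℕ) : Set (EuclideanSpace ℝ (Fin n)) :=
  {x | (if p = ∞ then ⨆ i, |x i| else (∑ i, |x i| ^ p.toReal) ^ p.toReal⁻¹) ≤ 1}

/-- There exist `x_1, …, x_n ∈ B_p^n` with `ε·B_q^n ⊆ absconv(x_1, …, x_n)`;
equivalently (by Lemma 4.5 of the paper), `Γ_n(B_p^n, B_q^n) ≤ 1/ε`. -/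
def FactorsAt (p q : ℝ≥0∞) (n : ℕ) (ε : ℝ) : Prop :=
  ∃ x : Fin n → EuclideanSpace ℝ (Fin n), (∀ i, x i ∈ pball p n) ∧
    ε • pball q n ⊆ convexHull ℝ (Set.range x ∪ -Set.range x)

/-!
Two families of `n` points suffice. The standard basis vectors lie in `B_p^n`, and the expansion
`y = ∑ yᵢ eᵢ` together with `‖y‖₁ ≤ n^(1 - 1/q) ‖y‖_q` puts `n^(-(1 - 1/q)) B_q^n` into their
absolute convex hull. For the other regimes take the discrete Hartley basis `cas (2πjk/n)`,
`cas = cos + sin`: it is orthogonal with all entries bounded by `√2`, so once normalised and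
scaled into `B_p^n` it expands `y` with `ℓ₁`-coefficients at most `√2 n^(1/p) ‖y‖₂`
(Cauchy–Schwarz and Parseval), and `‖y‖₂ ≤ n^(max 0 (1/2 - 1/q)) ‖y‖_q`.
-/

open Finset Real
open scoped InnerProductSpace

theorem AbsConvex.sum_smul_mem {ι E : Type*} [Fintype ι] [AddCommGroup E] [Module ℝ E]
    {S : Set E} (hS : AbsConvex ℝ S) (h0 : 0 ∈ S) {x : ι → E} (hx : ∀ i, x i ∈ S)
    {c : ι → ℝ} (hc : ∑ i, |c i| ≤ 1) : ∑ i, c i • x i ∈ S := by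
  have hsign : ∀ i, (SignType.sign (c i) : ℝ) • x i ∈ S := fun i =>
    hS.1.smul_mem (by rcases SignType.sign (c i) with _ | _ | _ <;> simp) (hx i)
  -- the slack `1 - ∑ |c i|` is put on the point `0`
  have := hS.2.sum_mem (t := Finset.univ)
    (w := fun o : Option ι => o.elim (1 - ∑ i, |c i|) fun i => |c i|)
    (z := fun o : Option ι => o.elim 0 fun i => (SignType.sign (c i) : ℝ) • x i)
    (by rintro (_ | i) - <;> simp [hc]) (by simp [Fintype.sum_option])
    (by rintro (_ | i) - <;> simp [h0, hsign])
  simpa [Fintype.sum_option, smul_smul] using this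

theorem sum_smul_mem_absConvexHull {ι E : Type*} [Fintype ι] [Nonempty ι] [AddCommGroup E]
    [Module ℝ E] (x : ι → E) {c : ι → ℝ} (hc : ∑ i, |c i| ≤ 1) :
    ∑ i, c i • x i ∈ absConvexHull ℝ (Set.range x) :=
  absConvex_absConvexHull.sum_smul_mem
    (balanced_absConvexHull.zero_mem ((Set.range_nonempty x).mono subset_absConvexHull))
    (fun i => subset_absConvexHull (Set.mem_range_self i)) hc

theorem sum_abs_rpow_le_card_rpow_mul {ι : Type*} [Fintype ι] (f : ι → ℝ) {r t : ℝ}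
    (hr : 0 < r) (hrt : r ≤ t) :
    ∑ i, |f i| ^ r ≤ (Fintype.card ι : ℝ) ^ (1 - r / t) * (∑ i, |f i| ^ t) ^ (r / t) := by
  have ht : 0 < t := hr.trans_le hrt
  have key := Real.rpow_sum_le_const_mul_sum_rpow_of_nonneg univ (f := fun i => |f i| ^ r)
    ((one_le_div hr).2 hrt) (fun i _ => by positivity)
  simp only [card_univ, ← Real.rpow_mul (abs_nonneg _), mul_div_cancel₀ t hr.ne'] at key
  rw [← Real.rpow_le_rpow_iff (by positivity) (by positivity) (div_pos ht hr),
    Real.mul_rpow (by positivity) (by positivity), ← Real.rpow_mul (by positivity),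
    ← Real.rpow_mul (by positivity), div_mul_div_cancel₀ ht.ne', div_self hr.ne', Real.rpow_one]
  convert key using 3
  field_simp

theorem EuclideanSpace.norm_eq_sum_abs_rpow {ι : Type*} [Fintype ι] (v : EuclideanSpace ℝ ι) :
    ‖v‖ = (∑ i, |v i| ^ (2 : ℝ)) ^ (1 / 2 : ℝ) := by
  simp [PiLp.norm_eq_sum (p := 2) (by norm_num)]

theorem EuclideanSpace.sum_abs_le_sqrt_card_mul_norm {ι : Type*} [Fintype ι]
    (v : EuclideanSpace ℝ ι) : ∑ i, |v i| ≤ √(Fintype.card ι) * ‖v‖ := by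
  have h := sum_abs_rpow_le_card_rpow_mul (fun i => v i) one_pos one_le_two
  norm_num at h
  simpa [norm_eq_sum_abs_rpow, Real.sqrt_eq_rpow] using h

section Pball

variable {p q : ℝ≥0∞} {n : ℕ} {x y : EuclideanSpace ℝ (Fin n)} {r : ℝ}

theorem mem_pball_iff_sum_le (hp : 1 ≤ p) (hp' : p ≠ ∞) :
    x ∈ pball p n ↔ ∑ i, |x i| ^ p.toReal ≤ 1 := by
  have hp0 : 0 < p.toReal := ENNReal.toReal_pos (by positivity) hp'
  simp only [pball, Set.mem_ofPred_eq, if_neg hp']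
  rw [Real.rpow_inv_le_iff_of_pos (by positivity) zero_le_one hp0, Real.one_rpow]

theorem mem_pball_top_iff (hn : 0 < n) : x ∈ pball ∞ n ↔ ∀ i, |x i| ≤ 1 := by
  have : Nonempty (Fin n) := ⟨⟨0, hn⟩⟩
  simp [pball, ciSup_le_iff (Set.finite_range _).bddAbove]

theorem abs_le_one_of_mem_pball (hp : 1 ≤ p) (hx : x ∈ pball p n) (i : Fin n) : |x i| ≤ 1 := by
  have hn : 0 < n := i.pos
  by_cases hp' : p = ∞
  · subst hp'
    exact (mem_pball_top_iff hn).1 hx i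
  have hp0 : 0 < p.toReal := ENNReal.toReal_pos (by positivity) hp'
  rw [mem_pball_iff_sum_le hp hp'] at hx
  have hi : |x i| ^ p.toReal ≤ 1 :=
    (single_le_sum (fun j _ => by positivity) (mem_univ i)).trans hx
  exact (Real.rpow_le_rpow_iff (abs_nonneg _) zero_le_one hp0).1 (by rwa [Real.one_rpow])

theorem single_mem_pball (hp : 1 ≤ p) (i : Fin n) :
    EuclideanSpace.single i (1 : ℝ) ∈ pball p n := by
  by_cases hp' : p = ∞
  · subst hp'
    rw [mem_pball_top_iff i.pos]
    intro j
    by_cases hj : j = i <;> simp [hj]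
  have hp0 : 0 < p.toReal := ENNReal.toReal_pos (by positivity) hp'
  rw [mem_pball_iff_sum_le hp hp']
  simp [apply_ite (fun t : ℝ => |t| ^ p.toReal), Real.zero_rpow hp0.ne']

theorem mem_pball_of_abs_le (hp : 1 ≤ p) (hn : 0 < n)
    (hx : ∀ i, |x i| ≤ (n : ℝ) ^ (-p.toReal⁻¹)) : x ∈ pball p n := by
  by_cases hp' : p = ∞
  · subst hp'
    simpa [mem_pball_top_iff hn] using hx
  have hp0 : 0 < p.toReal := ENNReal.toReal_pos (by positivity) hp'
  rw [mem_pball_iff_sum_le hp hp']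
  calc ∑ i, |x i| ^ p.toReal ≤ ∑ _i : Fin n, ((n : ℝ) ^ (-p.toReal⁻¹)) ^ p.toReal :=
        sum_le_sum fun i _ => Real.rpow_le_rpow (abs_nonneg _) (hx i) hp0.le
    _ = 1 := by
        rw [sum_const, card_univ, Fintype.card_fin, nsmul_eq_mul, ← Real.rpow_mul n.cast_nonneg,
          neg_mul, inv_mul_cancel₀ hp0.ne', Real.rpow_neg_one,
          mul_inv_cancel₀ (Nat.cast_ne_zero.2 hn.ne')]

theorem sum_abs_rpow_le_of_mem_pball (hq : 1 ≤ q) (hr : 0 < r) (hrq : ENNReal.ofReal r ≤ q)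
    (hy : y ∈ pball q n) : ∑ i, |y i| ^ r ≤ (n : ℝ) ^ (1 - r * q.toReal⁻¹) := by
  by_cases hq' : q = ∞
  · subst hq'
    calc ∑ i, |y i| ^ r ≤ ∑ _i : Fin n, (1 : ℝ) := sum_le_sum fun i _ =>
          Real.rpow_le_one (abs_nonneg _) (abs_le_one_of_mem_pball hq hy i) hr.le
      _ = (n : ℝ) ^ (1 - r * (∞ : ℝ≥0∞).toReal⁻¹) := by simp
  have hrt : r ≤ q.toReal := (ENNReal.ofReal_le_iff_le_toReal hq').1 hrq
  calc ∑ i, |y i| ^ r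
      ≤ (n : ℝ) ^ (1 - r / q.toReal) * (∑ i, |y i| ^ q.toReal) ^ (r / q.toReal) := by
        simpa using sum_abs_rpow_le_card_rpow_mul (fun i => y i) hr hrt
    _ ≤ (n : ℝ) ^ (1 - r / q.toReal) * 1 := by
        gcongr
        exact Real.rpow_le_one (by positivity) ((mem_pball_iff_sum_le hq hq').1 hy) (by positivity)
    _ = (n : ℝ) ^ (1 - r * q.toReal⁻¹) := by rw [mul_one, div_eq_mul_inv]

theorem sum_abs_rpow_le_one_of_mem_pball (hq : 1 ≤ q) (hqr : q ≤ ENNReal.ofReal r)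
    (hy : y ∈ pball q n) : ∑ i, |y i| ^ r ≤ 1 := by
  have hq' : q ≠ ∞ := ne_top_of_le_ne_top ENNReal.ofReal_ne_top hqr
  have hq0 : 0 < q.toReal := ENNReal.toReal_pos (by positivity) hq'
  have hr : 0 ≤ r := zero_le_one.trans (ENNReal.one_le_ofReal.1 (hq.trans hqr))
  have htr : q.toReal ≤ r := ENNReal.toReal_le_of_le_ofReal hr hqr
  calc ∑ i, |y i| ^ r ≤ ∑ i, |y i| ^ q.toReal := sum_le_sum fun i _ =>
        Real.rpow_le_rpow_of_exponent_ge' (abs_nonneg _) (abs_le_one_of_mem_pball hq hy i)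
          hq0.le htr
    _ ≤ 1 := (mem_pball_iff_sum_le hq hq').1 hy

theorem norm_le_of_mem_pball_of_two_le (hq : 2 ≤ q) (hy : y ∈ pball q n) :
    ‖y‖ ≤ (n : ℝ) ^ (1 / 2 - q.toReal⁻¹) := by
  have hsum := sum_abs_rpow_le_of_mem_pball (one_le_two.trans hq) two_pos (by simpa using hq) hy
  calc ‖y‖ = (∑ i, |y i| ^ (2 : ℝ)) ^ (1 / 2 : ℝ) := EuclideanSpace.norm_eq_sum_abs_rpow y
    _ ≤ ((n : ℝ) ^ (1 - 2 * q.toReal⁻¹)) ^ (1 / 2 : ℝ) := by gcongr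
    _ = (n : ℝ) ^ (1 / 2 - q.toReal⁻¹) := by rw [← Real.rpow_mul n.cast_nonneg]; ring_nf

theorem norm_le_one_of_mem_pball_of_le_two (hq : 1 ≤ q) (hq2 : q ≤ 2) (hy : y ∈ pball q n) :
    ‖y‖ ≤ 1 := by
  rw [EuclideanSpace.norm_eq_sum_abs_rpow]
  exact Real.rpow_le_one (by positivity)
    (sum_abs_rpow_le_one_of_mem_pball hq (by simpa using hq2) hy) (by norm_num)

end Pball

section Hartley

variable {n : ℕ}

theorem sum_cexp_two_pi_mul (hn : 0 < n) (m : ℤ) :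
    ∑ k : Fin n, Complex.exp (2 * π * Complex.I * m * k / n) =
      if (n : ℤ) ∣ m then (n : ℂ) else 0 := by
  have hω := Complex.isPrimitiveRoot_exp n hn.ne'
  set z := Complex.exp (2 * π * Complex.I / n) ^ m
  have hpow : ∀ k : ℕ, Complex.exp (2 * π * Complex.I * m * k / n) = z ^ k := by
    intro k
    rw [← zpow_natCast, ← zpow_mul, ← Complex.exp_int_mul]
    congr 1
    push_cast
    ring
  simp only [hpow, Fin.sum_univ_eq_sum_range (z ^ ·)]
  split_ifs with hdvd
  · simp [z, (hω.zpow_eq_one_iff_dvd m).2 hdvd]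
  · have hz : z ^ n = 1 := by
      rw [← zpow_natCast, ← zpow_mul, mul_comm m, zpow_mul, zpow_natCast, hω.pow_eq_one, one_zpow]
    rw [geom_sum_eq ((hω.zpow_eq_one_iff_dvd m).not.2 hdvd), hz, sub_self, zero_div]

theorem sum_cos_two_pi_mul (hn : 0 < n) (m : ℤ) :
    ∑ k : Fin n, cos (2 * π * m * k / n) = if (n : ℤ) ∣ m then (n : ℝ) else 0 := by
  have h := congrArg Complex.re (sum_cexp_two_pi_mul hn m)
  rw [Complex.re_sum] at h
  convert h using 2 with k
  · rw [show 2 * π * Complex.I * m * k / n = ((2 * π * m * k / n : ℝ) : ℂ) * Complex.I by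
      push_cast; ring, Complex.exp_ofReal_mul_I_re]
  · split_ifs <;> simp

theorem sum_sin_two_pi_mul (hn : 0 < n) (m : ℤ) : ∑ k : Fin n, sin (2 * π * m * k / n) = 0 := by
  have h := congrArg Complex.im (sum_cexp_two_pi_mul hn m)
  rw [Complex.im_sum] at h
  convert h using 2 with k
  · rw [show 2 * π * Complex.I * m * k / n = ((2 * π * m * k / n : ℝ) : ℂ) * Complex.I by
      push_cast; ring, Complex.exp_ofReal_mul_I_im]
  · split_ifs <;> simp

theorem cos_add_sin_mul_cos_add_sin (a b : ℝ) :
    (cos a + sin a) * (cos b + sin b) = cos (a - b) + sin (a + b) := by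
  rw [cos_sub, sin_add]
  ring

noncomputable def hartley (n : ℕ) (j : Fin n) : EuclideanSpace ℝ (Fin n) :=
  WithLp.toLp 2 fun k => cos (2 * π * j * k / n) + sin (2 * π * j * k / n)

theorem inner_hartley (hn : 0 < n) (j j' : Fin n) :
    ⟪hartley n j, hartley n j'⟫_ℝ = if j = j' then (n : ℝ) else 0 := by
  simp only [hartley, PiLp.inner_apply, RCLike.inner_apply, conj_trivial,
    cos_add_sin_mul_cos_add_sin]
  have hsub : ∀ k : Fin n, 2 * π * (j' : ℕ) * k / n - 2 * π * (j : ℕ) * k / n =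
      2 * π * (((j' : ℕ) - (j : ℕ) : ℤ) : ℝ) * k / n := fun k => by push_cast; ring
  have hadd : ∀ k : Fin n, 2 * π * (j' : ℕ) * k / n + 2 * π * (j : ℕ) * k / n =
      2 * π * (((j' : ℕ) + (j : ℕ) : ℤ) : ℝ) * k / n := fun k => by push_cast; ring
  have hdvd : (n : ℤ) ∣ (j' : ℕ) - (j : ℕ) ↔ j = j' := by
    refine ⟨fun h => ?_, fun h => by simp [h]⟩
    have := Int.eq_zero_of_abs_lt_dvd h (abs_lt.2 ⟨by omega, by omega⟩)
    exact Fin.ext (by omega)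
  simp only [hsub, hadd, sum_add_distrib, sum_cos_two_pi_mul hn, sum_sin_two_pi_mul hn, hdvd,
    add_zero]

theorem abs_hartley_le (j k : Fin n) : |hartley n j k| ≤ √2 := by
  set θ := 2 * π * j * k / n
  refine Real.abs_le_sqrt ?_
  change (cos θ + sin θ) ^ 2 ≤ 2
  nlinarith [sin_sq_add_cos_sq θ, sq_nonneg (cos θ - sin θ)]

theorem exists_orthonormalBasis_abs_le (hn : 0 < n) :
    ∃ b : OrthonormalBasis (Fin n) ℝ (EuclideanSpace ℝ (Fin n)), ∀ j k, |b j k| ≤ √2 / √n := by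
  have : Nonempty (Fin n) := ⟨⟨0, hn⟩⟩
  have hsqrt : 0 < √(n : ℝ) := Real.sqrt_pos.2 (by exact_mod_cast hn)
  have hon : Orthonormal ℝ fun j => (√n)⁻¹ • hartley n j := by
    rw [orthonormal_iff_ite]
    intro j j'
    rw [inner_smul_left, inner_smul_right, inner_hartley hn]
    split_ifs
    · simp [← mul_assoc, ← mul_inv, Real.mul_self_sqrt n.cast_nonneg, hn.ne']
    · simp
  refine ⟨(basisOfOrthonormalOfCardEqFinrank hon (by simp)).toOrthonormalBasis
    (by simpa using hon), fun j k => ?_⟩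
  simp only [Module.Basis.coe_toOrthonormalBasis, coe_basisOfOrthonormalOfCardEqFinrank,
    PiLp.smul_apply, smul_eq_mul, abs_mul, abs_inv, abs_of_pos hsqrt]
  rw [div_eq_inv_mul]
  exact mul_le_mul_of_nonneg_left (abs_hartley_le j k) (inv_nonneg.2 hsqrt.le)

end Hartley

section Construction

variable {p q : ℝ≥0∞} {n : ℕ} {ε : ℝ}

theorem factorsAt_of_orthonormalBasis (hn : 0 < n) (hε : 0 ≤ ε) {s : ℝ} (hs : 0 < s)
    (b : OrthonormalBasis (Fin n) ℝ (EuclideanSpace ℝ (Fin n))) (hb : ∀ j, s • b j ∈ pball p n)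
    (h : ∀ y ∈ pball q n, ε * ∑ j, |b.repr y j| ≤ s) : FactorsAt p q n ε := by
  have : Nonempty (Fin n) := ⟨⟨0, hn⟩⟩
  refine ⟨fun j => s • b j, hb, ?_⟩
  rintro _ ⟨y, hy, rfl⟩
  have hrepr : ε • y = ∑ j, (ε / s * b.repr y j) • (s • b j) := by
    conv_lhs => rw [← b.sum_repr y]
    simp only [smul_sum, smul_smul]
    congr! 2 with j
    field_simp
  rw [convexHull_union_neg_eq_absConvexHull]
  change ε • y ∈ _
  rw [hrepr]
  apply sum_smul_mem_absConvexHull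
  calc ∑ j, |ε / s * b.repr y j| = (ε * ∑ j, |b.repr y j|) / s := by
        simp only [abs_mul, abs_div, abs_of_nonneg hε, abs_of_pos hs, ← mul_sum]
        ring
    _ ≤ 1 := (div_le_one hs).2 (h y hy)

theorem factorsAt_of_forall_sum_abs_le (hp : 1 ≤ p) (hn : 0 < n) (hε : 0 ≤ ε)
    (h : ∀ y ∈ pball q n, ε * ∑ i, |y i| ≤ 1) : FactorsAt p q n ε :=
  factorsAt_of_orthonormalBasis hn hε one_pos (EuclideanSpace.basisFun _ ℝ)
    (fun j => by simpa using single_mem_pball hp j) (by simpa using h)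

theorem factorsAt_of_forall_norm_le (hp : 1 ≤ p) (hn : 0 < n) (hε : 0 ≤ ε)
    (h : ∀ y ∈ pball q n, √2 * (n : ℝ) ^ p.toReal⁻¹ * ε * ‖y‖ ≤ 1) : FactorsAt p q n ε := by
  obtain ⟨b, hb⟩ := exists_orthonormalBasis_abs_le hn
  have hn' : (0 : ℝ) < n := by exact_mod_cast hn
  have hsqrt : 0 < √(n : ℝ) := Real.sqrt_pos.2 hn'
  have hM : 0 < √2 * (n : ℝ) ^ p.toReal⁻¹ := by positivity
  refine factorsAt_of_orthonormalBasis hn hε (s := √n / (√2 * (n : ℝ) ^ p.toReal⁻¹))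
    (by positivity) b (fun j => mem_pball_of_abs_le hp hn fun k => ?_) fun y hy => ?_
  · calc |((√n / (√2 * (n : ℝ) ^ p.toReal⁻¹)) • b j) k|
        ≤ √n / (√2 * (n : ℝ) ^ p.toReal⁻¹) * (√2 / √n) := by
          rw [PiLp.smul_apply, smul_eq_mul, abs_mul, abs_of_pos (by positivity)]
          gcongr
          exact hb j k
      _ = (n : ℝ) ^ (-p.toReal⁻¹) := by
          rw [Real.rpow_neg hn'.le]
          field_simp
  · calc ε * ∑ j, |b.repr y j| ≤ ε * (√n * ‖y‖) := by
          gcongr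
          simpa using EuclideanSpace.sum_abs_le_sqrt_card_mul_norm (b.repr y)
      _ ≤ √n / (√2 * (n : ℝ) ^ p.toReal⁻¹) := by
          rw [le_div_iff₀ hM]
          calc ε * (√n * ‖y‖) * (√2 * (n : ℝ) ^ p.toReal⁻¹)
              = √n * (√2 * (n : ℝ) ^ p.toReal⁻¹ * ε * ‖y‖) := by ring
            _ ≤ √n := mul_le_of_le_one_right hsqrt.le (h y hy)

theorem factorsAt_mul_rpow_neg_one_sub_inv (hp : 1 ≤ p) (hq : 1 ≤ q) (hn : 0 < n) {c : ℝ}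
    (hc : 0 ≤ c) (hc1 : c ≤ 1) : FactorsAt p q n (c * (n : ℝ) ^ (-(1 - q.toReal⁻¹))) := by
  have hn' : (0 : ℝ) < n := by exact_mod_cast hn
  refine factorsAt_of_forall_sum_abs_le hp hn (by positivity) fun y hy => ?_
  have hsum : ∑ i, |y i| ≤ (n : ℝ) ^ (1 - q.toReal⁻¹) := by
    simpa using sum_abs_rpow_le_of_mem_pball hq one_pos (by simpa using hq) hy
  calc c * (n : ℝ) ^ (-(1 - q.toReal⁻¹)) * ∑ i, |y i|
      ≤ c * (n : ℝ) ^ (-(1 - q.toReal⁻¹)) * (n : ℝ) ^ (1 - q.toReal⁻¹) := by gcongr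
    _ = c := by rw [mul_assoc, ← Real.rpow_add hn', neg_add_cancel, Real.rpow_zero, mul_one]
    _ ≤ 1 := hc1

theorem factorsAt_of_two_le (hp : 1 ≤ p) (hq : 2 ≤ q) (hn : 0 < n) :
    FactorsAt p q n ((√2)⁻¹ * (n : ℝ) ^ (-(1 / 2 + p.toReal⁻¹ - q.toReal⁻¹))) := by
  have hn' : (0 : ℝ) < n := by exact_mod_cast hn
  refine factorsAt_of_forall_norm_le hp hn (by positivity) fun y hy => ?_
  set a := p.toReal⁻¹
  set b := q.toReal⁻¹
  calc √2 * (n : ℝ) ^ a * ((√2)⁻¹ * (n : ℝ) ^ (-(1 / 2 + a - b))) * ‖y‖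
      ≤ √2 * (n : ℝ) ^ a * ((√2)⁻¹ * (n : ℝ) ^ (-(1 / 2 + a - b))) * (n : ℝ) ^ (1 / 2 - b) := by
        gcongr
        exact norm_le_of_mem_pball_of_two_le hq hy
    _ = (n : ℝ) ^ (a + -(1 / 2 + a - b) + (1 / 2 - b)) := by
        rw [Real.rpow_add hn', Real.rpow_add hn']
        field_simp
    _ = 1 := by rw [show a + -(1 / 2 + a - b) + (1 / 2 - b) = 0 by ring, Real.rpow_zero]

theorem factorsAt_of_le_two (hp : 1 ≤ p) (hq : 1 ≤ q) (hq2 : q ≤ 2) (hn : 0 < n) :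
    FactorsAt p q n ((√2)⁻¹ * (n : ℝ) ^ (-p.toReal⁻¹)) := by
  have hn' : (0 : ℝ) < n := by exact_mod_cast hn
  refine factorsAt_of_forall_norm_le hp hn (by positivity) fun y hy => ?_
  calc √2 * (n : ℝ) ^ p.toReal⁻¹ * ((√2)⁻¹ * (n : ℝ) ^ (-p.toReal⁻¹)) * ‖y‖
      ≤ √2 * (n : ℝ) ^ p.toReal⁻¹ * ((√2)⁻¹ * (n : ℝ) ^ (-p.toReal⁻¹)) * 1 := by
        gcongr
        exact norm_le_one_of_mem_pball_of_le_two hq hq2 hy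
    _ = 1 := by
        rw [Real.rpow_neg hn'.le]
        field_simp

end Construction

/-- For all `1 ≤ p, q ≤ ∞` there is a constant `C_{p,q}` such that
`Γ_n(B_p^n, B_q^n) ≤ C_{p,q}·n^θ`, i.e. there exist `x_1, …, x_n ∈ B_p^n` with
`(C_{p,q}^{-1}·n^{-θ})·B_q^n ⊆ absconv(x_1, …, x_n)`, where
`θ = 1/2 + 1/p - 1/q` if `2 ≤ p, q ≤ ∞`; `θ = 1 - 1/q` if `1 ≤ p ≤ 2`;
`θ = 1 - 1/q` if `1 ≤ q ≤ 2 ≤ p ≤ ∞` and `p' > q`; `θ = 1/p` if `1 ≤ q ≤ 2 ≤ p ≤ ∞` and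
`p' ≤ q` (with `1/∞ = 0`, and `p' = p/(p-1)` the conjugate exponent of `p`). -/
theorem stmt10 (p q : ℝ≥0∞) (hp : 1 ≤ p) (hq : 1 ≤ q) :
    ∃ C : ℝ, 0 < C ∧ ∀ n : ℕ, 0 < n →
      (2 ≤ p ∧ 2 ≤ q →
        FactorsAt p q n (C⁻¹ * (n : ℝ) ^ (-(1 / 2 + p.toReal⁻¹ - q.toReal⁻¹)))) ∧
      (p ≤ 2 →
        FactorsAt p q n (C⁻¹ * (n : ℝ) ^ (-(1 - q.toReal⁻¹)))) ∧
      (q ≤ 2 ∧ 2 ≤ p ∧ q.toReal < (if p = ∞ then 1 else p.toReal / (p.toReal - 1)) →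
        FactorsAt p q n (C⁻¹ * (n : ℝ) ^ (-(1 - q.toReal⁻¹)))) ∧
      (q ≤ 2 ∧ 2 ≤ p ∧ (if p = ∞ then 1 else p.toReal / (p.toReal - 1)) ≤ q.toReal →
        FactorsAt p q n (C⁻¹ * (n : ℝ) ^ (-(p.toReal⁻¹)))) := by
  refine ⟨√2, by positivity, fun n hn => ⟨fun h => factorsAt_of_two_le hp h.2 hn,
    fun _ => ?_, fun _ => ?_, fun h => factorsAt_of_le_two hp hq h.1 hn⟩⟩ <;>
  exact factorsAt_mul_rpow_neg_one_sub_inv hp hq hn (by positivity)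
    (inv_le_one_of_one_le₀ (Real.one_le_sqrt.2 one_le_two))
end
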